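/- arXiv:0912.4181 — 3 statements merged into one kernel-verified Lean document; each statement's English description precedes it below -/
import Mathlib

section
/- If c ∈ U' is a critical point of f (f′(c) = 0) which is periodic, i.e., f^j(c) ∈ U' for all 0 ≤ j < p and f^p(c) = c for some integer p ≥ 1, then c belongs to the topological interior of K_f. -/
/-!
Since `f'(c) = 0`, the chain rule makes `c` a superattracting fixed point of `g = f^p`, so every
small ball `B` around `c` is mapped into itself by `g`. Choosing `B` so small that its first `p`
iterates under `f` stay in the open set `U'`, writing `n = j + p q` with `j < p` shows that every
`f`-orbit starting in `B` stays in `U'`; hence `B ⊆ K_f`.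
-/

open Set Metric Filter Topology

/-- The local degree `deg(f,z)`: the order of vanishing at `z` of `ζ ↦ f ζ - f z`,
i.e. the least `n ≥ 1` whose `n`-th derivative of `ζ ↦ f ζ - f z` at `z` is nonzero. -/
noncomputable def localDeg (f : ℂ → ℂ) (z : ℂ) : ℕ :=
  sInf {n : ℕ | 0 < n ∧ iteratedDeriv n (fun w => f w - f z) z ≠ 0}

/-- `χ(z) = sup_{n ≥ 1} deg(fⁿ, z)`, valued in `ℕ∞`. -/
noncomputable def chiFn (f : ℂ → ℂ) (z : ℂ) : ℕ∞ :=
  ⨆ n : ℕ, (localDeg (f^[n + 1]) z : ℕ∞)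

/-- The open unit disk `𝔻 ⊆ ℂ`. -/
def uDisk : Set ℂ := Metric.ball 0 1

/-- `V = (γ_1 ∘ g_{ε_1} ∘ γ_2 ∘ g_{ε_2} ∘ ⋯ ∘ γ_k ∘ g_{ε_k})(𝔻)`. -/
noncomputable def Vset {d : ℕ} (g : Fin d → ℂ → ℂ) {k : ℕ}
    (gam : Fin k → ℂ → ℂ) (eps : Fin k → Fin d) : Set ℂ :=
  (List.ofFn (fun l => gam l ∘ g (eps l))).foldr (· ∘ ·) id '' uDisk

/-- `K_0 = U` and, for `k ≥ 1`, `K_k = {z ∈ U' : f^j(z) ∈ U' for 0 ≤ j ≤ k-1}`,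
the `k`-th preimage `f^{-k}(U)`. -/
def Kiter (U U' : Set ℂ) (f : ℂ → ℂ) : ℕ → Set ℂ
  | 0 => U
  | k + 1 => {z ∈ U' | ∀ j ≤ k, f^[j] z ∈ U'}

section Iterates

variable {𝕜 E : Type*} [NontriviallyNormedField 𝕜] [NormedAddCommGroup E] [NormedSpace 𝕜 E]

theorem DifferentiableOn.differentiableAt_iterate {f : E → E} {s : Set E}
    (hf : DifferentiableOn 𝕜 f s) (hs : IsOpen s) {x : E} :
    ∀ {n : ℕ}, (∀ j < n, f^[j] x ∈ s) → DifferentiableAt 𝕜 f^[n] x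
  | 0, _ => differentiableAt_id
  | n + 1, hx => by
    rw [Function.iterate_succ']
    exact (hf.differentiableAt (hs.mem_nhds (hx n n.lt_succ_self))).comp x
      (differentiableAt_iterate hf hs fun j hj => hx j (hj.trans n.lt_succ_self))

theorem HasFDerivAt.eventually_norm_sub_le {g : E → E} {g' : E →L[𝕜] E} {c : E}
    (hg : HasFDerivAt g g' c) (hg' : ‖g'‖ < 1) :
    ∀ᶠ z in 𝓝 c, ‖g z - g c‖ ≤ ‖z - c‖ := by
  filter_upwards [hg.isLittleO.def (sub_pos.2 hg')] with z hz
  calc ‖g z - g c‖ ≤ ‖g z - g c - g' (z - c)‖ + ‖g' (z - c)‖ := norm_le_norm_sub_add _ _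
    _ ≤ (1 - ‖g'‖) * ‖z - c‖ + ‖g'‖ * ‖z - c‖ := add_le_add hz (g'.le_opNorm _)
    _ = ‖z - c‖ := by ring

theorem HasFDerivAt.eventually_forall_iterate_mem {g : E → E} {g' : E →L[𝕜] E} {c : E}
    (hg : HasFDerivAt g g' c) (hg' : ‖g'‖ < 1) (hc : g c = c) {s : Set E} (hs : s ∈ 𝓝 c) :
    ∀ᶠ z in 𝓝 c, ∀ n, g^[n] z ∈ s := by
  obtain ⟨r, hr, hball⟩ :=
    Metric.eventually_nhds_iff_ball.1 ((hg.eventually_norm_sub_le hg').and hs)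
  have hmaps : MapsTo g (ball c r) (ball c r) := fun z hz => by
    have hgz := (hball z hz).1
    rw [hc] at hgz
    rw [mem_ball_iff_norm] at hz ⊢
    exact hgz.trans_lt hz
  filter_upwards [ball_mem_nhds c hr] with z hz n
  exact (hball _ (hmaps.iterate n hz)).2

end Iterates

theorem Function.forall_iterate_mem_of_forall_iterate_iterate {α : Type*} {f : α → α}
    {s : Set α} {p : ℕ} (hp : 0 < p) {z : α} (h : ∀ q, ∀ j < p, f^[j] ((f^[p])^[q] z) ∈ s)
    (n : ℕ) : f^[n] z ∈ s := by
  rw [← Nat.mod_add_div n p, Function.iterate_add_apply, Function.iterate_mul]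
  exact h _ _ (Nat.mod_lt n hp)

theorem stmt_1_general
    (N : ℕ)
    (Ui : Fin N → Set ℂ)
    (hUiopen : ∀ i, IsOpen (Ui i))
    (U' : Set ℂ) (hU' : U' = ⋃ i, Ui i)
    (f : ℂ → ℂ)
    (hf : ∃ Ω : Set ℂ, IsOpen Ω ∧ closure U' ⊆ Ω ∧ DifferentiableOn ℂ f Ω)
    (Kf : Set ℂ)
    (hKf : Kf = {z ∈ U' | ∀ n : ℕ, f^[n] z ∈ U'})
    :
    ∀ c ∈ U', deriv f c = 0 →
      ∀ p : ℕ, 1 ≤ p → (∀ j < p, f^[j] c ∈ U') → f^[p] c = c →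
        c ∈ interior Kf := by
  intro c hc hc0 p hp horb hper
  obtain ⟨Ω, -, hU'Ω, hfΩ⟩ := hf
  have hU'open : IsOpen U' := hU' ▸ isOpen_iUnion hUiopen
  have hfU' : DifferentiableOn ℂ f U' := hfΩ.mono (subset_closure.trans hU'Ω)
  obtain ⟨m, rfl⟩ := Nat.exists_eq_add_of_le' hp
  have hderiv : HasDerivAt (f^[m + 1]) 0 c := by
    have hfc : HasDerivAt f 0 c :=
      hc0 ▸ (hfU'.differentiableAt (hU'open.mem_nhds hc)).hasDerivAt
    have hrest : DifferentiableAt ℂ f^[m] (f c) :=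
      hfU'.differentiableAt_iterate hU'open fun j hj => by
        simpa only [← Function.iterate_succ_apply] using horb (j + 1) (by omega)
    simpa only [Function.iterate_succ, mul_zero] using hrest.hasDerivAt.comp c hfc
  have hnear : {z | ∀ j < m + 1, f^[j] z ∈ U'} ∈ 𝓝 c := by
    simp only [ofPred_forall]
    refine (Filter.biInter_mem (Set.finite_lt_nat _)).2 fun j hj => ?_
    exact ((hfU'.differentiableAt_iterate hU'open fun i hi => horb i (hi.trans hj)
      ).continuousAt).preimage_mem_nhds (hU'open.mem_nhds (horb j hj))
  have htrap := hderiv.hasFDerivAt.eventually_forall_iterate_mem (by simp) hper hnear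
  rw [hKf, mem_interior_iff_mem_nhds]
  filter_upwards [htrap] with z hz
  have hzU' := Function.forall_iterate_mem_of_forall_iterate_iterate m.succ_pos hz
  exact ⟨hzU' 0, hzU'⟩

theorem stmt_1
    (N : ℕ) (hN : 1 ≤ N)
    (U : Set ℂ) (hUopen : IsOpen U) (hUne : U.Nonempty)
    (hUdisk : ∃ h : ℂ → ℂ, DifferentiableOn ℂ h uDisk ∧ Set.BijOn h uDisk U)
    (Ui : Fin N → Set ℂ)
    (hUiopen : ∀ i, IsOpen (Ui i)) (hUine : ∀ i, (Ui i).Nonempty)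
    (hUidisk : ∀ i, ∃ h : ℂ → ℂ, DifferentiableOn ℂ h uDisk ∧ Set.BijOn h uDisk (Ui i))
    (hUidisj : ∀ i j, i ≠ j → Disjoint (Ui i) (Ui j))
    (hUicl : ∀ i, closure (Ui i) ⊆ U)
    (U' : Set ℂ) (hU' : U' = ⋃ i, Ui i)
    (f : ℂ → ℂ)
    (hf : ∃ Ω : Set ℂ, IsOpen Ω ∧ closure U' ⊆ Ω ∧ DifferentiableOn ℂ f Ω)
    (dI : Fin N → ℕ) (hdI : ∀ i, 1 ≤ dI i)
    (hfmaps : ∀ i, Set.MapsTo f (Ui i) U)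
    (hfdeg : ∀ i, ∀ w ∈ U, (∑ᶠ z ∈ {z ∈ Ui i | f z = w}, localDeg f z) = dI i)
    (d : ℕ) (hdsum : d = ∑ i, dI i) (hd2 : 2 ≤ d)
    (Kf Jf : Set ℂ)
    (hKf : Kf = {z ∈ U' | ∀ n : ℕ, f^[n] z ∈ U'})
    (hJf : Jf = frontier Kf)
    :
    ∀ c ∈ U', deriv f c = 0 →
      ∀ p : ℕ, 1 ≤ p → (∀ j < p, f^[j] c ∈ U') → f^[p] c = c →
        c ∈ interior Kf :=
  stmt_1_general N Ui hUiopen U' hU' f hf Kf hKf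
end

section
/- The map π : Σ_d → J_f is surjective. -/
open Set Metric Filter Topology

/-! Over `U \ K_f` there are no critical values, so every fibre of `f` in `U'` has exactly `d`
points, and the `d` distinct values `φ (g_j u)` are all of them. Hence a point `y ∉ K_f` whose
first `k + 1` iterates stay in `U'` lies in some `φ (V_w)` with `|w| = k + 1`. Every `z ∈ J_f` is
a limit of such points, so at each level `z` is in the closure of some `φ (V_w)`; these words
are nested, and compactness of `Σ_d` yields `ε` with `z ∈ ⋂ₖ closure (φ (V_{ε^k})) = {π ε}`. -/
theorem localDeg_eq_one_of_deriv_ne_zero {f : ℂ → ℂ} {z : ℂ} (h : deriv f z ≠ 0) :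
    localDeg f z = 1 := by
  have h1 : 1 ∈ {n : ℕ | 0 < n ∧ iteratedDeriv n (fun w => f w - f z) z ≠ 0} := by
    refine ⟨one_pos, ?_⟩
    rwa [iteratedDeriv_one, deriv_sub_const]
  exact le_antisymm (Nat.sInf_le h1) (Nat.sInf_mem ⟨1, h1⟩).1

theorem encard_eq_of_finsum_localDeg {f : ℂ → ℂ} {s : Set ℂ} {n : ℕ}
    (hs : ∀ z ∈ s, deriv f z ≠ 0) (hsum : ∑ᶠ z ∈ s, localDeg f z = n) (hn : n ≠ 0) :
    s.encard = n := by
  have hcard : s.ncard = n := by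
    rw [← finsum_one, ← hsum]
    exact finsum_mem_congr rfl fun z hz => (localDeg_eq_one_of_deriv_ne_zero (hs z hz)).symm
  rw [← (Set.finite_of_ncard_ne_zero (hcard ▸ hn)).cast_ncard_eq, hcard]

theorem AnalyticAt.nhds_le_map_nhds_of_deriv_ne_zero {f : ℂ → ℂ} {z : ℂ}
    (hf : AnalyticAt ℂ f z) (h : deriv f z ≠ 0) : 𝓝 (f z) ≤ map f (𝓝 z) :=
  (hf.hasStrictDerivAt.map_nhds_eq h).ge

section Topology

variable {X Y ι : Type*} [TopologicalSpace X] [TopologicalSpace Y]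

/-- Points of `V` near `b` would have `n + 1` preimages: themselves, and one near each of the
`n` preimages of `f b`. -/
theorem apply_notMem_of_mem_frontier [T2Space X] {f : X → Y} {V : Set X} {W : Set Y} {n : ℕ}
    (hV : IsOpen V) (hW : IsOpen W) (hfib : ∀ w ∈ W, {x ∈ V | f x = w}.encard = n)
    (hopen : ∀ x ∈ V, f x ∈ W → 𝓝 (f x) ≤ map f (𝓝 x))
    {b : X} (hb : b ∈ frontier V) (hfb : ContinuousAt f b) : f b ∉ W := by
  intro hbW
  set T := {x ∈ V | f x = f b}
  have hTfin : T.Finite := Set.finite_of_encard_eq_coe (hfib _ hbW)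
  have hbT : b ∉ T := fun h => (hV.frontier_eq ▸ hb).2 h.1
  obtain ⟨O, hO, hdisj⟩ := (hTfin.insert b).t2_separation
  have hnhds : W ∩ ⋂ x ∈ T, f '' (O x ∩ V) ∈ 𝓝 (f b) := by
    refine inter_mem (hW.mem_nhds hbW) ((biInter_mem hTfin).2 fun x hx => ?_)
    rw [← hx.2]
    exact hopen x hx.1 (hx.2 ▸ hbW)
      (image_mem_map (inter_mem ((hO x).2.mem_nhds (hO x).1) (hV.mem_nhds hx.1)))
  obtain ⟨b', ⟨⟨hb'W, hb'T⟩, hb'O⟩, hb'V⟩ := mem_closure_iff_nhds.1 (frontier_subset_closure hb)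
    _ (inter_mem (hfb hnhds) ((hO b).2.mem_nhds (hO b).1))
  have hpre : ∀ x ∈ insert b T, ∃ y ∈ O x ∩ V, f y = f b' := by
    rintro x (rfl | hx)
    · exact ⟨b', ⟨hb'O, hb'V⟩, rfl⟩
    · exact mem_iInter₂.1 hb'T x hx
  choose! e heO hef using hpre
  have hle := Set.encard_le_encard_of_injOn (t := {x ∈ V | f x = f b'})
    (fun x hx => ⟨(heO x hx).2, hef x hx⟩) fun x hx y hy hxy =>
      hdisj.elim hx hy (Set.not_disjoint_iff.2 ⟨e x, (heO x hx).1, hxy ▸ (heO y hy).1⟩)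
  rw [Set.encard_insert_of_notMem hbT, hfib _ hbW, hfib _ hb'W] at hle
  exact absurd hle (by norm_cast; omega)

theorem IsPreconnected.subset_iUnion_of_disjoint_frontier [Finite ι] {V : ι → Set X}
    (hV : ∀ i, IsOpen (V i)) {S : Set X} (hS : IsPreconnected S)
    (hne : (S ∩ ⋃ i, V i).Nonempty) (hfr : ∀ i, Disjoint S (frontier (V i))) :
    S ⊆ ⋃ i, V i := by
  refine hS.subset_of_closure_inter_subset (isOpen_iUnion hV) hne ?_
  rintro y ⟨hycl, hyS⟩
  rw [closure_iUnion_of_finite] at hycl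
  obtain ⟨i, hi⟩ := mem_iUnion.1 hycl
  by_contra hy
  refine Set.disjoint_left.1 (hfr i) hyS ?_
  rw [(hV i).frontier_eq]
  exact ⟨hi, fun h => hy (mem_iUnion.2 ⟨i, h⟩)⟩

theorem IsPreconnected.subset_iUnion_of_mapsTo [T2Space X] [Finite ι] {f : X → Y}
    {V : ι → Set X} {W : Set Y} {n : ι → ℕ} (hV : ∀ i, IsOpen (V i)) (hW : IsOpen W)
    (hfib : ∀ i, ∀ w ∈ W, {x ∈ V i | f x = w}.encard = n i)
    (hopen : ∀ i, ∀ x ∈ V i, f x ∈ W → 𝓝 (f x) ≤ map f (𝓝 x))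
    (hcont : ∀ x ∈ closure (⋃ i, V i), ContinuousAt f x)
    {S : Set X} (hS : IsPreconnected S) (hne : (S ∩ ⋃ i, V i).Nonempty) (hSW : MapsTo f S W) :
    S ⊆ ⋃ i, V i := by
  refine hS.subset_iUnion_of_disjoint_frontier hV hne fun i => Set.disjoint_left.2 fun y hyS hy =>
    apply_notMem_of_mem_frontier (hV i) hW (hfib i) (hopen i) hy (hcont y ?_) (hSW hyS)
  exact closure_mono (subset_iUnion V i) (frontier_subset_closure hy)

theorem exists_mem_closure_of_diff_subset_iUnion [Finite ι] {N K : Set X} {A : ι → Set X}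
    {z : X} (hN : IsOpen N) (hzN : z ∈ N) (hz : z ∈ closure Kᶜ) (hsub : N \ K ⊆ ⋃ i, A i) :
    ∃ i, z ∈ closure (A i) := by
  have hz' : z ∈ closure (⋃ i, A i) := closure_mono hsub (hN.inter_closure ⟨hzN, hz⟩)
  rwa [closure_iUnion_of_finite, mem_iUnion] at hz'

end Topology

/-- König's lemma for finitely branching trees, via compactness of `ℕ → α`. -/
theorem exists_seq_forall_prefix {α : Type*} [Finite α]
    (P : (k : ℕ) → (Fin (k + 1) → α) → Prop)
    (hmono : ∀ k (w : Fin (k + 2) → α), P (k + 1) w → P k fun l => w l.castSucc)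
    (hne : ∀ k, ∃ w, P k w) : ∃ eps : ℕ → α, ∀ k, P k fun l => eps l := by
  let _ : TopologicalSpace α := ⊥
  have : DiscreteTopology α := ⟨rfl⟩
  set A : ℕ → Set (ℕ → α) := fun k => (fun eps (l : Fin (k + 1)) => eps l) ⁻¹' {w | P k w}
  have hcl : ∀ k, IsClosed (A k) := fun k =>
    (isClosed_discrete _).preimage (continuous_pi fun l => continuous_apply _)
  have hA : ∀ k, (A k).Nonempty := by
    intro k
    obtain ⟨w, hw⟩ := hne k
    have hext : (fun l : Fin (k + 1) => w ⟨min (l : ℕ) k, by omega⟩) = w :=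
      funext fun l => congrArg w (Fin.ext (min_eq_left (Nat.lt_succ_iff.1 l.2)))
    refine ⟨fun n => w ⟨min n k, by omega⟩, ?_⟩
    show P k fun l : Fin (k + 1) => w ⟨min (l : ℕ) k, _⟩
    rwa [hext]
  obtain ⟨eps, heps⟩ := IsCompact.nonempty_iInter_of_sequence_nonempty_isCompact_isClosed
    A (fun k _ h => hmono k _ h) hA (hcl 0).isCompact hcl
  exact ⟨eps, mem_iInter.1 heps⟩

theorem exists_apply_eq_of_encard_eq {α : Type*} {F : Set α} {d : ℕ} {e : Fin d → α}
    (hF : F.encard = d) (he : Function.Injective e) (hsub : ∀ j, e j ∈ F) {y : α} (hy : y ∈ F) :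
    ∃ j, e j = y := by
  have hrange : range e = F :=
    (finite_range e).eq_of_subset_of_encard_le (range_subset_iff.2 hsub)
      (by simpa [hF] using he.encard_range)
  rw [← hrange] at hy
  exact hy

section FilledSet

variable {U U' : Set ℂ} {f : ℂ → ℂ}

theorem iterate_mem_filledSet {z : ℂ} (hz : z ∈ {z ∈ U' | ∀ n : ℕ, f^[n] z ∈ U'}) (m : ℕ) :
    f^[m] z ∈ {z ∈ U' | ∀ n : ℕ, f^[n] z ∈ U'} :=
  ⟨hz.2 m, fun n => by simpa only [← Function.iterate_add_apply] using hz.2 (n + m)⟩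

theorem filledSet_subset_Kiter (k : ℕ) :
    {z ∈ U' | ∀ n : ℕ, f^[n] z ∈ U'} ⊆ Kiter U U' f (k + 1) :=
  fun _ hz => ⟨hz.1, fun j _ => hz.2 j⟩

theorem iterate_mem_diff_filledSet_of_mem_Kiter (hf : MapsTo f U' U) {k : ℕ} {y : ℂ}
    (hy : y ∈ Kiter U U' f (k + 1)) (hyK : y ∉ {z ∈ U' | ∀ n : ℕ, f^[n] z ∈ U'}) :
    f^[k + 1] y ∈ U \ {z ∈ U' | ∀ n : ℕ, f^[n] z ∈ U'} := by
  refine ⟨by simpa only [Function.iterate_succ_apply'] using hf (hy.2 k le_rfl), fun hK => ?_⟩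
  refine hyK ⟨hy.1, fun n => ?_⟩
  rcases le_or_gt n k with hn | hn
  · exact hy.2 n hn
  · simpa only [← Function.iterate_add_apply, Nat.sub_add_cancel hn] using hK.2 (n - (k + 1))

theorem Kiter_add_two (k : ℕ) : Kiter U U' f (k + 2) = U' ∩ f ⁻¹' Kiter U U' f (k + 1) := by
  ext y
  simp only [Kiter, mem_inter_iff, mem_preimage, mem_ofPred_eq]
  constructor
  · exact fun ⟨hy, h⟩ => ⟨hy, h 1 le_add_self, fun j hj => h (j + 1) (by omega)⟩
  · rintro ⟨hy, -, h⟩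
    refine ⟨hy, fun j hj => ?_⟩
    rcases j with _ | j
    exacts [hy, h j (by omega)]

theorem isOpen_Kiter_succ (hU' : IsOpen U') (hf : ContinuousOn f U')
    (k : ℕ) : IsOpen (Kiter U U' f (k + 1)) := by
  induction k with
  | zero => simpa [Kiter] using hU'
  | succ k ih => rw [Kiter_add_two]; exact hf.isOpen_inter_preimage hU' ih

end FilledSet

section Vset

variable {d : ℕ} {g : Fin d → ℂ → ℂ}

theorem Vset_zero (gam : Fin 0 → ℂ → ℂ) (eps : Fin 0 → Fin d) : Vset g gam eps = uDisk := by
  rw [Vset, List.ofFn_zero, List.foldr_nil, image_id]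

theorem Vset_succ {k : ℕ} (gam : Fin (k + 1) → ℂ → ℂ) (eps : Fin (k + 1) → Fin d) :
    Vset g gam eps =
      (gam 0 ∘ g (eps 0)) '' Vset g (fun l => gam l.succ) fun l => eps l.succ := by
  rw [Vset, Vset, List.ofFn_succ, List.foldr_cons, image_comp]

theorem Vset_subset_uDisk (hg : ∀ j, MapsTo (g j) uDisk uDisk) {k : ℕ} {gam : Fin k → ℂ → ℂ}
    (hgam : ∀ l, MapsTo (gam l) uDisk uDisk) (eps : Fin k → Fin d) : Vset g gam eps ⊆ uDisk := by
  induction k with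
  | zero => rw [Vset_zero]
  | succ k ih =>
    rw [Vset_succ]
    exact ((hgam 0).comp (hg (eps 0))).mono_left (ih (fun l => hgam l.succ) _) |>.image_subset

variable {phi : ℂ → ℂ} {Gfam : (k : ℕ) → (Fin k → Fin d) → Fin k → ℂ → ℂ}

theorem image_Vset_cons (hg : ∀ j, MapsTo (g j) uDisk uDisk)
    (hGmaps : ∀ k eps l, MapsTo (Gfam k eps l) uDisk uDisk)
    (hdeck : ∀ k eps l, ∀ x ∈ uDisk, phi (Gfam k eps l x) = phi x)
    (hshift : ∀ (k : ℕ) (eps : Fin (k + 1) → Fin d) (l : Fin k),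
      Gfam (k + 1) eps l.succ = Gfam k (fun m => eps m.succ) l)
    {k : ℕ} (w : Fin k → Fin d) (j : Fin d) :
    phi '' Vset g (Gfam (k + 1) (Fin.cons j w)) (Fin.cons j w) =
      phi '' (g j '' Vset g (Gfam k w) w) := by
  have hshift' : (fun l : Fin k => Gfam (k + 1) (Fin.cons j w) l.succ) = Gfam k w :=
    funext fun l => by simpa using hshift k (Fin.cons j w) l
  rw [Vset_succ, hshift', image_comp, image_image]
  simp only [Fin.cons_zero, Fin.cons_succ]
  refine image_congr ?_
  rintro _ ⟨v, hv, rfl⟩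
  exact hdeck _ _ _ _ (hg j (Vset_subset_uDisk hg (hGmaps k w) w hv))

theorem exists_word_mem_image_Vset {U' : Set ℂ} {f : ℂ → ℂ} (hg : ∀ j, MapsTo (g j) uDisk uDisk)
    (hGmaps : ∀ k eps l, MapsTo (Gfam k eps l) uDisk uDisk)
    (hdeck : ∀ k eps l, ∀ x ∈ uDisk, phi (Gfam k eps l x) = phi x)
    (hshift : ∀ (k : ℕ) (eps : Fin (k + 1) → Fin d) (l : Fin k),
      Gfam (k + 1) eps l.succ = Gfam k (fun m => eps m.succ) l)
    (hlift : ∀ y ∈ U', ∀ u ∈ uDisk, f y = phi u → ∃ j, phi (g j u) = y)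
    (k : ℕ) {y : ℂ} (hsurv : ∀ m < k, f^[m] y ∈ U') (hy : f^[k] y ∈ phi '' uDisk) :
    ∃ w : Fin k → Fin d, y ∈ phi '' Vset g (Gfam k w) w := by
  induction k generalizing y with
  | zero => exact ⟨Fin.elim0, by rwa [Vset_zero]⟩
  | succ k ih =>
    obtain ⟨w, u, hu, hfy⟩ := ih (y := f y) (fun m hm => by
      simpa only [← Function.iterate_succ_apply] using hsurv (m + 1) (by omega)) hy
    obtain ⟨j, hj⟩ := hlift y (hsurv 0 k.succ_pos) u (Vset_subset_uDisk hg (hGmaps k w) w hu)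
      hfy.symm
    exact ⟨Fin.cons j w, by
      rw [image_Vset_cons hg hGmaps hdeck hshift]; exact ⟨g j u, mem_image_of_mem _ hu, hj⟩⟩

theorem image_branch_inter_nonempty {U' : Set ℂ} {pi : (ℕ → Fin d) → ℂ}
    (hg : ∀ j, MapsTo (g j) uDisk uDisk)
    (hGmaps : ∀ k eps l, MapsTo (Gfam k eps l) uDisk uDisk)
    (hdeck : ∀ k eps l, ∀ x ∈ uDisk, phi (Gfam k eps l x) = phi x)
    (hshift : ∀ (k : ℕ) (eps : Fin (k + 1) → Fin d) (l : Fin k),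
      Gfam (k + 1) eps l.succ = Gfam k (fun m => eps m.succ) l)
    (hU' : IsOpen U') (hpi : ∀ eps, pi eps ∈ U')
    (hpidef : ∀ eps : ℕ → Fin d,
      (⋂ k : ℕ, closure (phi '' Vset g (Gfam (k + 1) (fun l : Fin (k + 1) => eps l))
        (fun l : Fin (k + 1) => eps l))) = {pi eps})
    (j : Fin d) : (phi '' (g j '' uDisk) ∩ U').Nonempty := by
  have hmem := mem_iInter.1 ((hpidef fun _ => j).symm ▸ mem_singleton (pi fun _ => j)) 0
  have hw : (fun _ : Fin 1 => j) = Fin.cons j Fin.elim0 :=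
    funext fun l => by rw [Fin.fin_one_eq_zero l, Fin.cons_zero]
  rw [hw, image_Vset_cons hg hGmaps hdeck hshift, Vset_zero] at hmem
  exact inter_comm U' _ ▸ mem_closure_iff.1 hmem U' hU' (hpi _)

end Vset

/-- The values `φ (g_j u)` lie in `U'` because `φ (g_j 𝔻)` is connected and cannot cross any
`∂U_i`, which `f` maps outside `U \ K`; being `d` distinct points of a `d`-point fibre of `f`, they
exhaust it. -/
theorem exists_branch_eq_of_apply_eq {N d : ℕ} {U U' K Ω : Set ℂ} {Ui : Fin N → Set ℂ}
    {f phi : ℂ → ℂ} {dI : Fin N → ℕ} {g : Fin d → ℂ → ℂ}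
    (hUopen : IsOpen U) (hUiopen : ∀ i, IsOpen (Ui i))
    (hUidisj : ∀ i j, i ≠ j → Disjoint (Ui i) (Ui j)) (hU' : U' = ⋃ i, Ui i)
    (hΩ : IsOpen Ω) (hU'Ω : closure U' ⊆ Ω) (hfΩ : DifferentiableOn ℂ f Ω)
    (hdI : ∀ i, 1 ≤ dI i)
    (hfdeg : ∀ i, ∀ w ∈ U, (∑ᶠ z ∈ {z ∈ Ui i | f z = w}, localDeg f z) = dI i)
    (hdsum : d = ∑ i, dI i)
    (hK : IsClosed K) (hKinv : ∀ z ∈ K, f z ∈ K) (hcritK : ∀ z ∈ U', deriv f z = 0 → z ∈ K)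
    (hphidiff : DifferentiableOn ℂ phi uDisk) (hphimaps : MapsTo phi uDisk (U \ K))
    (hgmaps : ∀ j, MapsTo (g j) uDisk uDisk) (hgdiff : ∀ j, DifferentiableOn ℂ (g j) uDisk)
    (hglift : ∀ j, ∀ z ∈ uDisk, f (phi (g j z)) = phi z)
    (hgdist : ∀ j j' : Fin d, j ≠ j' → ∀ z ∈ uDisk, phi (g j z) ≠ phi (g j' z))
    (hne : ∀ j, (phi '' (g j '' uDisk) ∩ U').Nonempty)
    {y : ℂ} (hy : y ∈ U') {u : ℂ} (hu : u ∈ uDisk) (hfy : f y = phi u) :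
    ∃ j, phi (g j u) = y := by
  subst hU'
  have hnoncrit : ∀ x ∈ ⋃ i, Ui i, f x ∉ K → deriv f x ≠ 0 :=
    fun x hx hfx h0 => hfx (hKinv x (hcritK x hx h0))
  have hfib : ∀ i, ∀ p ∈ U \ K, {z ∈ Ui i | f z = p}.encard = dI i := fun i p hp =>
    encard_eq_of_finsum_localDeg (fun z hz => hnoncrit z (mem_iUnion_of_mem i hz.1) (hz.2 ▸ hp.2))
      (hfdeg i p hp.1) (Nat.one_le_iff_ne_zero.1 (hdI i))
  have hbranch : ∀ j, phi '' (g j '' uDisk) ⊆ ⋃ i, Ui i := by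
    intro j
    refine IsPreconnected.subset_iUnion_of_mapsTo hUiopen (hUopen.sdiff hK) hfib
      (fun i x hx hfx => ?_) (fun x hx => ?_) ?_ (hne j) ?_
    · exact (hfΩ.analyticAt (hΩ.mem_nhds (hU'Ω (subset_closure (mem_iUnion_of_mem i hx)))))
        |>.nhds_le_map_nhds_of_deriv_ne_zero (hnoncrit x (mem_iUnion_of_mem i hx) hfx.2)
    · exact (hfΩ.differentiableAt (hΩ.mem_nhds (hU'Ω hx))).continuousAt
    · rw [← image_comp]
      exact (convex_ball (0 : ℂ) 1).isPreconnected.image _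
        (hphidiff.continuousOn.comp (hgdiff j).continuousOn (hgmaps j))
    · rintro _ ⟨_, ⟨v, hv, rfl⟩, rfl⟩
      rw [hglift j v hv]
      exact hphimaps hv
  have hfibU' : {z ∈ ⋃ i, Ui i | f z = phi u}.encard = d := by
    have hsplit : {z ∈ ⋃ i, Ui i | f z = phi u} = ⋃ i, {z ∈ Ui i | f z = phi u} := by
      ext
      simp only [mem_iUnion, mem_sep_iff, exists_and_right]
      rfl
    rw [hsplit, encard_iUnion_of_finite fun i j hij =>
        (hUidisj i j hij).mono (sep_subset _ _) (sep_subset _ _),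
      finsum_eq_sum_of_fintype, hdsum, Nat.cast_sum]
    exact Finset.sum_congr rfl fun i _ => hfib i _ (hphimaps hu)
  exact exists_apply_eq_of_encard_eq hfibU'
    (fun j j' h => by_contra fun hjj' => hgdist j j' hjj' u hu h)
    (fun j => ⟨hbranch j (mem_image_of_mem _ (mem_image_of_mem _ hu)), hglift j u hu⟩) ⟨hy, hfy⟩

theorem stmt_13_general
    (N : ℕ)
    (U : Set ℂ) (hUopen : IsOpen U)
    (Ui : Fin N → Set ℂ)
    (hUiopen : ∀ i, IsOpen (Ui i))
    (hUidisj : ∀ i j, i ≠ j → Disjoint (Ui i) (Ui j))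
    (U' : Set ℂ) (hU' : U' = ⋃ i, Ui i)
    (f : ℂ → ℂ)
    (hf : ∃ Ω : Set ℂ, IsOpen Ω ∧ closure U' ⊆ Ω ∧ DifferentiableOn ℂ f Ω)
    (dI : Fin N → ℕ) (hdI : ∀ i, 1 ≤ dI i)
    (hfmaps : ∀ i, Set.MapsTo f (Ui i) U)
    (hfdeg : ∀ i, ∀ w ∈ U, (∑ᶠ z ∈ {z ∈ Ui i | f z = w}, localDeg f z) = dI i)
    (d : ℕ) (hdsum : d = ∑ i, dI i)
    (Kf Jf : Set ℂ)
    (hKf : Kf = {z ∈ U' | ∀ n : ℕ, f^[n] z ∈ U'})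
    (hJf : Jf = frontier Kf)
    (hKJ : Kf = Jf) (hKcomp : IsCompact Kf)
    (hcritK : ∀ z ∈ U', deriv f z = 0 → z ∈ Kf)
    (w : ℂ)
    (phi : ℂ → ℂ)
    (hphidiff : DifferentiableOn ℂ phi uDisk)
    (hphimaps : Set.MapsTo phi uDisk (U \ Jf))
    (hphisurj : phi '' uDisk = U \ Jf)
    (Gam : Set (ℂ → ℂ))
    (hGam : Gam = {γ : ℂ → ℂ | Set.BijOn γ uDisk uDisk ∧ DifferentiableOn ℂ γ uDisk ∧
      ∀ z ∈ uDisk, phi (γ z) = phi z})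
    (g : Fin d → ℂ → ℂ)
    (hgmaps : ∀ j, Set.MapsTo (g j) uDisk uDisk)
    (hgdiff : ∀ j, DifferentiableOn ℂ (g j) uDisk)
    (hglift : ∀ j, ∀ z ∈ uDisk, f (phi (g j z)) = phi z)
    (hgdist : ∀ j j' : Fin d, j ≠ j' → ∀ z ∈ uDisk, phi (g j z) ≠ phi (g j' z))
    (Gfam : (k : ℕ) → (Fin k → Fin d) → Fin k → ℂ → ℂ)
    (hGfamMem : ∀ (k : ℕ) (eps : Fin k → Fin d) (l : Fin k), Gfam k eps l ∈ Gam)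
    (hnest : ∀ k : ℕ, 1 ≤ k → ∀ eps : Fin (k + 1) → Fin d,
      Vset g (Gfam (k + 1) eps) eps ⊆
        Vset g (Gfam k (fun l => eps l.castSucc)) (fun l => eps l.castSucc))
    (hshiftinv : ∀ (k : ℕ) (eps : Fin (k + 1) → Fin d) (l : Fin k),
      Gfam (k + 1) eps l.succ = Gfam k (fun m => eps m.succ) l)
    (pi : (ℕ → Fin d) → ℂ)
    (hpiJ : ∀ eps, pi eps ∈ Jf)
    (hpidef : ∀ eps : ℕ → Fin d,
      (⋂ k : ℕ, closure (phi '' Vset g (Gfam (k + 1) (fun l : Fin (k + 1) => eps l))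
        (fun l : Fin (k + 1) => eps l))) = {pi eps})
    :
    ∀ z ∈ Jf, ∃ eps : ℕ → Fin d, pi eps = z := by
  intro z hz
  obtain ⟨Ω, hΩ, hU'Ω, hfΩ⟩ := hf
  subst hKJ
  have hU'open : IsOpen U' := hU' ▸ isOpen_iUnion hUiopen
  have hKU' : Kf ⊆ U' := hKf ▸ fun z hz => hz.1
  have hGmaps : ∀ k eps l, MapsTo (Gfam k eps l) uDisk uDisk := fun k eps l =>
    (hGam ▸ hGfamMem k eps l).1.mapsTo
  have hdeck : ∀ k eps l, ∀ x ∈ uDisk, phi (Gfam k eps l x) = phi x := fun k eps l =>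
    (hGam ▸ hGfamMem k eps l).2.2
  have hne := image_branch_inter_nonempty hgmaps hGmaps hdeck hshiftinv hU'open
    (fun eps => hKU' (hpiJ eps)) hpidef
  have hlift : ∀ y ∈ U', ∀ u ∈ uDisk, f y = phi u → ∃ j, phi (g j u) = y :=
    fun y hy u hu hfy => exists_branch_eq_of_apply_eq hUopen hUiopen hUidisj hU' hΩ hU'Ω hfΩ hdI
      hfdeg hdsum hKcomp.isClosed (fun z hz => hKf ▸ iterate_mem_filledSet (hKf ▸ hz) 1) hcritK
      hphidiff hphimaps hgmaps hgdiff hglift hgdist hne hy hu hfy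
  have hfU : MapsTo f U' U := hU' ▸ fun x hx => (mem_iUnion.1 hx).elim fun i hi => hfmaps i hi
  have hzfr : z ∈ closure Kfᶜ := by
    have hzfront := hz
    rw [hJf, frontier_eq_closure_inter_closure] at hzfront
    exact hzfront.2
  have hcode : ∀ k, ∃ v : Fin (k + 1) → Fin d, z ∈ closure (phi '' Vset g (Gfam (k + 1) v) v) :=
    fun k => exists_mem_closure_of_diff_subset_iUnion
      (isOpen_Kiter_succ hU'open (hfΩ.continuousOn.mono (subset_closure.trans hU'Ω)) k)
      (filledSet_subset_Kiter k (hKf ▸ hz)) hzfr fun y ⟨hyN, hyK⟩ => mem_iUnion.2 <|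
        exists_word_mem_image_Vset hgmaps hGmaps hdeck hshiftinv hlift (k + 1)
          (fun m hm => hyN.2 m (Nat.lt_succ_iff.1 hm))
          (hphisurj ▸ hKf ▸ iterate_mem_diff_filledSet_of_mem_Kiter hfU hyN (hKf ▸ hyK))
  obtain ⟨eps, heps⟩ := exists_seq_forall_prefix
    (fun k v => z ∈ closure (phi '' Vset g (Gfam (k + 1) v) v))
    (fun k v h => closure_mono (image_mono (hnest (k + 1) k.succ_pos v)) h) hcode
  exact ⟨eps, ((hpidef eps).subset (mem_iInter.2 heps)).symm⟩

theorem stmt_13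
    (N : ℕ) (hN : 1 ≤ N)
    (U : Set ℂ) (hUopen : IsOpen U) (hUne : U.Nonempty)
    (hUdisk : ∃ h : ℂ → ℂ, DifferentiableOn ℂ h uDisk ∧ Set.BijOn h uDisk U)
    (Ui : Fin N → Set ℂ)
    (hUiopen : ∀ i, IsOpen (Ui i)) (hUine : ∀ i, (Ui i).Nonempty)
    (hUidisk : ∀ i, ∃ h : ℂ → ℂ, DifferentiableOn ℂ h uDisk ∧ Set.BijOn h uDisk (Ui i))
    (hUidisj : ∀ i j, i ≠ j → Disjoint (Ui i) (Ui j))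
    (hUicl : ∀ i, closure (Ui i) ⊆ U)
    (U' : Set ℂ) (hU' : U' = ⋃ i, Ui i)
    (f : ℂ → ℂ)
    (hf : ∃ Ω : Set ℂ, IsOpen Ω ∧ closure U' ⊆ Ω ∧ DifferentiableOn ℂ f Ω)
    (dI : Fin N → ℕ) (hdI : ∀ i, 1 ≤ dI i)
    (hfmaps : ∀ i, Set.MapsTo f (Ui i) U)
    (hfdeg : ∀ i, ∀ w ∈ U, (∑ᶠ z ∈ {z ∈ Ui i | f z = w}, localDeg f z) = dI i)
    (d : ℕ) (hdsum : d = ∑ i, dI i) (hd2 : 2 ≤ d)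
    (Kf Jf : Set ℂ)
    (hKf : Kf = {z ∈ U' | ∀ n : ℕ, f^[n] z ∈ U'})
    (hJf : Jf = frontier Kf)
    (hKJ : Kf = Jf) (hKne : Kf.Nonempty) (hKcomp : IsCompact Kf)
    (hKtd : IsTotallyDisconnected Kf)
    (hKperf : ∀ x ∈ Kf, x ∈ closure (Kf \ {x}))
    (hcritK : ∀ z ∈ U', deriv f z = 0 → z ∈ Kf)
    (w : ℂ) (hw : w ∈ U \ U')
    (phi : ℂ → ℂ) (hphi0 : phi 0 = w)
    (hphidiff : DifferentiableOn ℂ phi uDisk)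
    (hphimaps : Set.MapsTo phi uDisk (U \ Jf))
    (hphisurj : phi '' uDisk = U \ Jf)
    (hphicov : IsCoveringMap (Set.MapsTo.restrict phi uDisk (U \ Jf) hphimaps))
    (Gam : Set (ℂ → ℂ))
    (hGam : Gam = {γ : ℂ → ℂ | Set.BijOn γ uDisk uDisk ∧ DifferentiableOn ℂ γ uDisk ∧
      ∀ z ∈ uDisk, phi (γ z) = phi z})
    (g : Fin d → ℂ → ℂ)
    (hgmaps : ∀ j, Set.MapsTo (g j) uDisk uDisk)
    (hgdiff : ∀ j, DifferentiableOn ℂ (g j) uDisk)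
    (hglift : ∀ j, ∀ z ∈ uDisk, f (phi (g j z)) = phi z)
    (hgdist : ∀ j j' : Fin d, j ≠ j' → ∀ z ∈ uDisk, phi (g j z) ≠ phi (g j' z))
    (hgmerge : ∀ j j' : Fin d, phi '' (g j '' uDisk) = phi '' (g j' '' uDisk) →
      g j '' uDisk = g j' '' uDisk)
    (Gfam : (k : ℕ) → (Fin k → Fin d) → Fin k → ℂ → ℂ)
    (hGfamMem : ∀ (k : ℕ) (eps : Fin k → Fin d) (l : Fin k), Gfam k eps l ∈ Gam)
    (hnest : ∀ k : ℕ, 1 ≤ k → ∀ eps : Fin (k + 1) → Fin d,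
      Vset g (Gfam (k + 1) eps) eps ⊆
        Vset g (Gfam k (fun l => eps l.castSucc)) (fun l => eps l.castSucc))
    (hshiftinv : ∀ (k : ℕ) (eps : Fin (k + 1) → Fin d) (l : Fin k),
      Gfam (k + 1) eps l.succ = Gfam k (fun m => eps m.succ) l)
    (hmerge : ∀ (k : ℕ) (eps eps' : Fin k → Fin d),
      phi '' Vset g (Gfam k eps) eps = phi '' Vset g (Gfam k eps') eps' →
        Vset g (Gfam k eps) eps = Vset g (Gfam k eps') eps')
    (pi : (ℕ → Fin d) → ℂ)
    (hpiJ : ∀ eps, pi eps ∈ Jf)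
    (hpidef : ∀ eps : ℕ → Fin d,
      (⋂ k : ℕ, closure (phi '' Vset g (Gfam (k + 1) (fun l : Fin (k + 1) => eps l))
        (fun l : Fin (k + 1) => eps l))) = {pi eps})
    (hpicont : Continuous pi)
    (hpiconj : ∀ eps : ℕ → Fin d, pi (fun n => eps (n + 1)) = f (pi eps))
    :
    ∀ z ∈ Jf, ∃ eps : ℕ → Fin d, pi eps = z :=
  stmt_13_general N U hUopen Ui hUiopen hUidisj U' hU' f hf dI hdI hfmaps hfdeg d hdsum Kf Jf hKf
    hJf hKJ hKcomp hcritK w phi hphidiff hphimaps hphisurj Gam hGam g hgmaps hgdiff hglift hgdist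
    Gfam hGfamMem hnest hshiftinv pi hpiJ hpidef
end

section
/- For every z ∈ J_f there exists N ∈ ℕ such that for all n ≥ N, fⁿ(z) is not a critical point of f; i.e., the forward orbit of f^N(z) contains no critical point. -/
open Set Metric Filter Topology

/-
`K_f = ∂K_f` has empty interior. Near a point `c ∈ K_f`, `f` cannot be constant (a neighbourhood
would be mapped to `f c ∈ K_f` and so lie in `K_f`), and if `c` is critical it cannot be periodic
(a neighbourhood would be attracted to the superattracting cycle and lie in `K_f`). Hence the
critical points of `f` in the compact set `K_f` are isolated, so finitely many, and an orbit in
`K_f` meeting them infinitely often would return to one of them, making it periodic.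
-/

section Iterates

variable {α : Type*} {f : α → α}

theorem Set.MapsTo.mapsTo_iterate_of_forall_lt {s t : Set α} {p : ℕ} (hp : 0 < p)
    (hperiod : MapsTo f^[p] s s) (hlt : ∀ j < p, MapsTo f^[j] s t) (n : ℕ) :
    MapsTo f^[n] s t := by
  rw [← Nat.mod_add_div n p, Function.iterate_add, Function.iterate_mul]
  exact (hlt _ (Nat.mod_lt n hp)).comp (hperiod.iterate _)

theorem exists_iterate_mem_periodicPts_of_infinite {S : Set α} {x : α} (hS : S.Finite)
    (h : {n | f^[n] x ∈ S}.Infinite) :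
    ∃ n, f^[n] x ∈ S ∧ f^[n] x ∈ Function.periodicPts f := by
  obtain ⟨m, hm, n, -, hmn, heq⟩ :=
    h.exists_ne_map_eq_of_mapsTo (f := fun n => f^[n] x) (fun _ h => h) hS
  wlog hlt : m < n generalizing m n
  · exact this n (show f^[n] x ∈ S from heq ▸ hm) m hmn.symm heq.symm
      (hmn.lt_or_gt.resolve_left hlt)
  refine ⟨m, hm, Function.mk_mem_periodicPts (Nat.sub_pos_of_lt hlt) ?_⟩
  rw [Function.IsPeriodicPt, Function.IsFixedPt, ← Function.iterate_add_apply,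
    Nat.sub_add_cancel hlt.le, heq]

end Iterates

section Derivative

variable {𝕜 : Type*} [NontriviallyNormedField 𝕜] {f : 𝕜 → 𝕜} {s : Set 𝕜} {c : 𝕜}

theorem HasDerivAt.exists_ball_subset_mapsTo {f' : 𝕜} (hf : HasDerivAt f f' c) (hc : f c = c)
    (hf' : ‖f'‖ < 1) {V : Set 𝕜} (hV : V ∈ 𝓝 c) :
    ∃ ε > 0, ball c ε ⊆ V ∧ MapsTo f (ball c ε) (ball c ε) := by
  have hcontract : ∀ᶠ w in 𝓝 c, ‖f w - c‖ ≤ ‖w - c‖ := by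
    filter_upwards [hf.isLittleO.def (sub_pos.2 hf')] with w hw
    rw [hc] at hw
    calc ‖f w - c‖ ≤ ‖f w - c - (w - c) • f'‖ + ‖(w - c) • f'‖ :=
          norm_le_norm_sub_add _ _
      _ ≤ (1 - ‖f'‖) * ‖w - c‖ + ‖w - c‖ * ‖f'‖ := by rw [norm_smul]; gcongr
      _ = ‖w - c‖ := by ring
  obtain ⟨ε, hε, hball⟩ := Metric.eventually_nhds_iff_ball.mp (hcontract.and hV)
  refine ⟨ε, hε, fun w hw => (hball w hw).2, fun w hw => ?_⟩
  rw [mem_ball_iff_norm] at hw ⊢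
  exact (hball w (mem_ball_iff_norm.2 hw)).1.trans_lt hw

theorem differentiableAt_iterate_of_forall_iterate_mem (hs : IsOpen s)
    (hf : DifferentiableOn 𝕜 f s) (hc : ∀ n, f^[n] c ∈ s) (n : ℕ) :
    DifferentiableAt 𝕜 f^[n] c := by
  induction n with
  | zero => exact differentiableAt_id
  | succ n ih =>
    rw [Function.iterate_succ']
    exact (hf.differentiableAt (hs.mem_nhds (hc n))).comp c ih

theorem hasDerivAt_iterate_zero_of_deriv_eq_zero (hs : IsOpen s) (hf : DifferentiableOn 𝕜 f s)
    (hc : ∀ n, f^[n] c ∈ s) (hcrit : deriv f c = 0) {p : ℕ} (hp : 0 < p) :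
    HasDerivAt f^[p] 0 c := by
  obtain ⟨m, rfl⟩ := Nat.exists_eq_add_of_lt hp
  have hfc : HasDerivAt f 0 c :=
    hcrit ▸ (hf.differentiableAt (hs.mem_nhds (hc 0))).hasDerivAt
  have horbit : ∀ n, f^[n] (f c) ∈ s := fun n =>
    Function.iterate_succ_apply f n c ▸ hc (n + 1)
  simpa [Function.iterate_succ] using
    (differentiableAt_iterate_of_forall_iterate_mem hs hf horbit m).hasDerivAt.comp c hfc

theorem mem_interior_setOf_forall_iterate_mem_of_eventually_eq (hs : IsOpen s)
    (hc : ∀ n, f^[n] c ∈ s) (hconst : ∀ᶠ w in 𝓝 c, f w = f c) :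
    c ∈ interior {w | ∀ n, f^[n] w ∈ s} := by
  rw [mem_interior_iff_mem_nhds]
  filter_upwards [hconst, hs.mem_nhds (hc 0)] with w hfw hw n
  cases n with
  | zero => exact hw
  | succ n => rw [Function.iterate_succ_apply, hfw, ← Function.iterate_succ_apply]; exact hc _

theorem mem_interior_setOf_forall_iterate_mem_of_isPeriodicPt (hs : IsOpen s)
    (hf : DifferentiableOn 𝕜 f s) (hc : ∀ n, f^[n] c ∈ s) (hcrit : deriv f c = 0) {p : ℕ}
    (hp : 0 < p) (hper : Function.IsPeriodicPt f p c) :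
    c ∈ interior {w | ∀ n, f^[n] w ∈ s} := by
  have hV : {w | ∀ j < p, f^[j] w ∈ s} ∈ 𝓝 c := by
    simp only [ofPred_forall]
    refine (biInter_mem (finite_lt_nat p)).2 fun j _ => ?_
    exact (differentiableAt_iterate_of_forall_iterate_mem hs hf hc j).continuousAt
      |>.preimage_mem_nhds (hs.mem_nhds (hc j))
  obtain ⟨ε, hε, hballV, hmaps⟩ :=
    (hasDerivAt_iterate_zero_of_deriv_eq_zero hs hf hc hcrit hp).exists_ball_subset_mapsTo
      hper (by simp) hV
  refine mem_interior.2 ⟨ball c ε, fun w hw n => ?_, isOpen_ball, mem_ball_self hε⟩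
  exact hmaps.mapsTo_iterate_of_forall_lt hp (fun j hj w hw => hballV hw j hj) n hw

end Derivative

section Analytic

variable {f : ℂ → ℂ}

theorem AnalyticAt.eventually_eq_or_eventually_deriv_ne_zero {c : ℂ} (hf : AnalyticAt ℂ f c) :
    (∀ᶠ w in 𝓝 c, f w = f c) ∨ ∀ᶠ w in 𝓝[≠] c, deriv f w ≠ 0 := by
  refine hf.deriv.eventually_eq_zero_or_eventually_ne_zero.imp_left fun hcrit => ?_
  obtain ⟨ε, hε, hball⟩ :=
    Metric.eventually_nhds_iff_ball.mp (hcrit.and hf.eventually_analyticAt)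
  filter_upwards [ball_mem_nhds c hε] with w hw
  exact isOpen_ball.is_const_of_deriv_eq_zero (convex_ball c ε).isPreconnected
    (fun x hx => (hball x hx).2.differentiableAt.differentiableWithinAt)
    (fun x hx => (hball x hx).1) hw (mem_ball_self hε)

theorem IsCompact.finite_setOf_deriv_eq_zero {K : Set ℂ} (hK : IsCompact K)
    (hf : ∀ c ∈ K, AnalyticAt ℂ f c) (hnc : ∀ c ∈ K, ¬ ∀ᶠ w in 𝓝 c, f w = f c) :
    {x ∈ K | deriv f x = 0}.Finite := by
  have hcodiscrete : {x | deriv f x ≠ 0} ∈ codiscreteWithin K := by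
    refine mem_codiscreteWithin_iff_forall_mem_nhdsNE.2 fun c hc => ?_
    exact mem_of_superset (((hf c hc).eventually_eq_or_eventually_deriv_ne_zero).resolve_left
      (hnc c hc)) subset_union_left
  exact (hK.finite_sdiff_of_mem_codiscreteWithin hcodiscrete).subset
    fun x hx => ⟨hx.1, not_not.2 hx.2⟩

end Analytic

theorem stmt_18_general
    (N : ℕ)
    (Ui : Fin N → Set ℂ)
    (hUiopen : ∀ i, IsOpen (Ui i))
    (U' : Set ℂ) (hU' : U' = ⋃ i, Ui i)
    (f : ℂ → ℂ)
    (hf : ∃ Ω : Set ℂ, IsOpen Ω ∧ closure U' ⊆ Ω ∧ DifferentiableOn ℂ f Ω)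
    (Kf Jf : Set ℂ)
    (hKf : Kf = {z ∈ U' | ∀ n : ℕ, f^[n] z ∈ U'})
    (hJf : Jf = frontier Kf)
    (hKJ : Kf = Jf) (hKcomp : IsCompact Kf)
    :
    ∀ z ∈ Jf, ∃ M : ℕ, ∀ n : ℕ, M ≤ n →
      ¬ (f^[n] z ∈ U' ∧ deriv f (f^[n] z) = 0) := by
  obtain ⟨Ω, hΩ, hU'Ω, hfΩ⟩ := hf
  have hU'open : IsOpen U' := hU' ▸ isOpen_iUnion hUiopen
  have hfU' : DifferentiableOn ℂ f U' := hfΩ.mono (subset_closure.trans hU'Ω)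
  have hKint : ∀ c, c ∉ interior Kf := fun c hc =>
    disjoint_left.1 disjoint_interior_frontier hc (hJf ▸ hKJ ▸ interior_subset hc)
  have hKeq : Kf = {z | ∀ n, f^[n] z ∈ U'} := by
    rw [hKf]
    ext z
    exact ⟨And.right, fun h => ⟨h 0, h⟩⟩
  subst hKJ hKeq
  have hcrit := hKcomp.finite_setOf_deriv_eq_zero (f := f)
    (fun c hc => hfΩ.analyticAt (hΩ.mem_nhds (hU'Ω (subset_closure (hc 0)))))
    fun c hc hconst =>
      hKint c (mem_interior_setOf_forall_iterate_mem_of_eventually_eq hU'open hc hconst)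
  intro z hz
  by_contra! hinf
  obtain ⟨m, ⟨hmK, hmcrit⟩, p, hp, hper⟩ := exists_iterate_mem_periodicPts_of_infinite hcrit
    (Nat.frequently_atTop_iff_infinite.1 (frequently_atTop.2 fun M => by
      obtain ⟨n, hMn, -, hn⟩ := hinf M
      exact ⟨n, hMn, fun k => Function.iterate_add_apply f k n z ▸ hz (k + n), hn⟩))
  exact hKint _
    (mem_interior_setOf_forall_iterate_mem_of_isPeriodicPt hU'open hfU' hmK hmcrit hp hper)

theorem stmt_18
    (N : ℕ) (hN : 1 ≤ N)
    (U : Set ℂ) (hUopen : IsOpen U) (hUne : U.Nonempty)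
    (hUdisk : ∃ h : ℂ → ℂ, DifferentiableOn ℂ h uDisk ∧ Set.BijOn h uDisk U)
    (Ui : Fin N → Set ℂ)
    (hUiopen : ∀ i, IsOpen (Ui i)) (hUine : ∀ i, (Ui i).Nonempty)
    (hUidisk : ∀ i, ∃ h : ℂ → ℂ, DifferentiableOn ℂ h uDisk ∧ Set.BijOn h uDisk (Ui i))
    (hUidisj : ∀ i j, i ≠ j → Disjoint (Ui i) (Ui j))
    (hUicl : ∀ i, closure (Ui i) ⊆ U)
    (U' : Set ℂ) (hU' : U' = ⋃ i, Ui i)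
    (f : ℂ → ℂ)
    (hf : ∃ Ω : Set ℂ, IsOpen Ω ∧ closure U' ⊆ Ω ∧ DifferentiableOn ℂ f Ω)
    (dI : Fin N → ℕ) (hdI : ∀ i, 1 ≤ dI i)
    (hfmaps : ∀ i, Set.MapsTo f (Ui i) U)
    (hfdeg : ∀ i, ∀ w ∈ U, (∑ᶠ z ∈ {z ∈ Ui i | f z = w}, localDeg f z) = dI i)
    (d : ℕ) (hdsum : d = ∑ i, dI i) (hd2 : 2 ≤ d)
    (Kf Jf : Set ℂ)
    (hKf : Kf = {z ∈ U' | ∀ n : ℕ, f^[n] z ∈ U'})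
    (hJf : Jf = frontier Kf)
    (hKJ : Kf = Jf) (hKne : Kf.Nonempty) (hKcomp : IsCompact Kf)
    (hKtd : IsTotallyDisconnected Kf)
    (hKperf : ∀ x ∈ Kf, x ∈ closure (Kf \ {x}))
    (hcritK : ∀ z ∈ U', deriv f z = 0 → z ∈ Kf)
    :
    ∀ z ∈ Jf, ∃ M : ℕ, ∀ n : ℕ, M ≤ n →
      ¬ (f^[n] z ∈ U' ∧ deriv f (f^[n] z) = 0) :=
  stmt_18_general N Ui hUiopen U' hU' f hf Kf Jf hKf hJf hKJ hKcomp
end
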